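/- An element x of L with normal form x = Σ_{i=1}^n λ_i x_i + λ c (0 ≤ λ_i < p_i) satisfies x ≥ 0 if and only if λ ≥ 0. -/

import Mathlib

/-- The subgroup of relations `p i • x_i - c` in the free abelian group on `x_1,…,x_n,c`. -/
def Lrel (n : ℕ) (p : Fin n → ℤ) : AddSubgroup ((Fin n → ℤ) × ℤ) :=
  AddSubgroup.closure {v | ∃ i : Fin n, v = (Pi.single i (p i), -1)}

/-- The Geigle-Lenzing group `L = ⟨x_1,…,x_n,c⟩ / ⟨p_i x_i - c⟩`. -/
abbrev Lgrp (n : ℕ) (p : Fin n → ℤ) : Type :=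
  ((Fin n → ℤ) × ℤ) ⧸ Lrel n p

/-- The generator `x_i` of `L`. -/
def Lx (n : ℕ) (p : Fin n → ℤ) (i : Fin n) : Lgrp n p :=
  QuotientAddGroup.mk (Pi.single i 1, 0)

/-- The canonical element `c` of `L`. -/
def Lc (n : ℕ) (p : Fin n → ℤ) : Lgrp n p :=
  QuotientAddGroup.mk (0, 1)

/-- The positive cone `L_+`, the submonoid generated by `x_1,…,x_n,c`. -/
def Lplus (n : ℕ) (p : Fin n → ℤ) : AddSubmonoid (Lgrp n p) :=
  AddSubmonoid.closure (Set.range (Lx n p) ∪ {Lc n p})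

/-- The parametrization of the relation subgroup. -/
def relHom (n : ℕ) (p : Fin n → ℤ) : (Fin n → ℤ) →+ ((Fin n → ℤ) × ℤ) where
  toFun k := (fun i => k i * p i, -∑ i, k i)
  map_zero' := by
    refine Prod.ext (funext fun i => by simp) (by simp)
  map_add' a b := by
    refine Prod.ext ?_ ?_
    · funext i; simp [add_mul]
    · simp [Finset.sum_add_distrib]; ring

lemma mem_Lrel_iff (n : ℕ) (p : Fin n → ℤ) (v : Fin n → ℤ) (m : ℤ) :
    (v, m) ∈ Lrel n p ↔ ∃ k : Fin n → ℤ, v = (fun i => k i * p i) ∧ m = -∑ i, k i := by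
  have hrange : Lrel n p = (relHom n p).range := by
    apply le_antisymm
    · rw [Lrel, AddSubgroup.closure_le]
      rintro w ⟨i, rfl⟩
      refine ⟨Pi.single i 1, ?_⟩
      refine Prod.ext ?_ ?_
      · funext j
        simp [relHom, Pi.single_apply]
        split <;> simp_all
      · simp [relHom, Finset.sum_pi_single']
    · rintro w ⟨k, rfl⟩
      have : relHom n p k = ∑ i, k i • ((Pi.single i (p i), -1) : (Fin n → ℤ) × ℤ) := by
        refine Prod.ext ?_ ?_
        · funext j
          rw [Prod.fst_sum]
          simp only [Prod.smul_fst, Finset.sum_apply, Pi.smul_apply, Pi.single_apply,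
            smul_eq_mul, mul_ite, mul_zero, Finset.sum_ite_eq, Finset.mem_univ, if_true]
          rfl
        · rw [Prod.snd_sum]
          simp [relHom]
      rw [this]
      unfold Lrel
      refine AddSubgroup.sum_mem _ fun i _ => AddSubgroup.zsmul_mem _ ?_ _
      exact AddSubgroup.subset_closure ⟨i, rfl⟩
  rw [hrange, AddMonoidHom.mem_range]
  constructor
  · rintro ⟨k, hk⟩
    exact ⟨k, by simpa [relHom, Prod.ext_iff, eq_comm] using hk⟩
  · rintro ⟨k, h1, h2⟩
    exact ⟨k, by simp [relHom, Prod.ext_iff, h1, h2]⟩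

lemma mk_eq (n : ℕ) (p : Fin n → ℤ) (a : Fin n → ℤ) (b : ℤ) :
    (∑ i, a i • Lx n p i) + b • Lc n p = QuotientAddGroup.mk (a, b) := by
  have key : ((a, b) : (Fin n → ℤ) × ℤ)
      = (∑ i, a i • ((Pi.single i 1, 0) : (Fin n → ℤ) × ℤ)) + b • ((0, 1) : (Fin n → ℤ) × ℤ) := by
    refine Prod.ext ?_ ?_
    · funext j
      rw [Prod.fst_add, Prod.fst_sum]
      simp only [Prod.smul_fst, Prod.smul_snd, Finset.sum_apply, Pi.smul_apply,
        Pi.single_apply, smul_eq_mul, mul_ite, mul_one, mul_zero,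
        Finset.sum_ite_eq', Finset.mem_univ, if_true, Pi.add_apply]
      simp
    · rw [Prod.snd_add, Prod.snd_sum]
      simp
  calc (∑ i, a i • Lx n p i) + b • Lc n p
      = QuotientAddGroup.mk ((∑ i, a i • ((Pi.single i 1, 0) : (Fin n → ℤ) × ℤ))
          + b • ((0, 1) : (Fin n → ℤ) × ℤ)) := by
        rw [QuotientAddGroup.mk_add, QuotientAddGroup.mk_zsmul]
        congr 1
        rw [QuotientAddGroup.mk_sum]
        exact Finset.sum_congr rfl (fun i _ => by rw [QuotientAddGroup.mk_zsmul]; rfl)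
    _ = QuotientAddGroup.mk (a, b) := by rw [← key]

lemma zsmul_mem_of_nonneg {M : Type*} [AddCommGroup M] (S : AddSubmonoid M) {g : M}
    (hg : g ∈ S) {m : ℤ} (hm : 0 ≤ m) : m • g ∈ S := by
  obtain ⟨k, rfl⟩ := Int.eq_ofNat_of_zero_le hm
  rw [natCast_zsmul]
  exact S.nsmul_mem hg k

lemma mem_Lplus_iff (n : ℕ) (p : Fin n → ℤ) (y : Lgrp n p) :
    y ∈ Lplus n p ↔ ∃ (a : Fin n → ℤ) (b : ℤ), (∀ i, 0 ≤ a i) ∧ 0 ≤ b ∧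
      y = QuotientAddGroup.mk (a, b) := by
  constructor
  · intro hy
    induction hy using AddSubmonoid.closure_induction with
    | mem z hz =>
      rcases hz with ⟨i, rfl⟩ | hz
      · exact ⟨Pi.single i 1, 0, fun j => by
          simp [Pi.single_apply]; split <;> simp, le_refl 0, rfl⟩
      · simp only [Set.mem_singleton_iff] at hz
        exact ⟨0, 1, fun j => le_refl 0, zero_le_one, by rw [hz]; rfl⟩
    | zero => exact ⟨0, 0, fun j => le_refl 0, le_refl 0, rfl⟩
    | add z w _ _ hz hw =>
      obtain ⟨a, b, ha, hb, rfl⟩ := hz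
      obtain ⟨a', b', ha', hb', rfl⟩ := hw
      exact ⟨a + a', b + b', fun i => add_nonneg (ha i) (ha' i), add_nonneg hb hb',
        (QuotientAddGroup.mk_add _ _ _).symm⟩
  · rintro ⟨a, b, ha, hb, rfl⟩
    rw [← mk_eq]
    unfold Lplus
    refine AddSubmonoid.add_mem _ ?_ ?_
    · refine AddSubmonoid.sum_mem _ fun i _ => ?_
      refine zsmul_mem_of_nonneg _ ?_ (ha i)
      exact AddSubmonoid.subset_closure (Or.inl ⟨i, rfl⟩)
    · refine zsmul_mem_of_nonneg _ ?_ hb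
      exact AddSubmonoid.subset_closure (Or.inr rfl)

/-- An element in normal form `x = Σ λ_i x_i + λ c` satisfies `x ≥ 0` iff `λ ≥ 0`. -/
theorem nonneg_iff_lambda_nonneg (n : ℕ) (hn : 1 ≤ n) (p : Fin n → ℤ)
    (hp : ∀ i, 2 ≤ p i) (lam : Fin n → ℤ) (l : ℤ)
    (hlam : ∀ i, 0 ≤ lam i ∧ lam i < p i) :
    ((∑ i, lam i • Lx n p i) + l • Lc n p ∈ Lplus n p) ↔ 0 ≤ l := by
  rw [mk_eq, mem_Lplus_iff]
  constructor
  · rintro ⟨a, b, ha, hb, heq⟩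
    rw [QuotientAddGroup.eq] at heq
    have : ((-lam + a, -l + b) : (Fin n → ℤ) × ℤ) ∈ Lrel n p := heq
    rw [mem_Lrel_iff] at this
    obtain ⟨k, hk1, hk2⟩ := this
    have hk : ∀ i, 0 ≤ k i := by
      intro i
      have h1 : k i * p i = -lam i + a i := by
        have := congrFun hk1 i; simpa using this.symm
      have hpos : (0 : ℤ) < p i := lt_of_lt_of_le two_pos (hp i)
      by_contra hneg
      push_neg at hneg
      have hki : k i ≤ -1 := by omega
      have : k i * p i ≤ (-1) * p i := mul_le_mul_of_nonneg_right hki hpos.le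
      have hlt : -lam i + a i ≤ -p i := by omega
      have := (hlam i).2
      have := ha i
      omega
    have hsum : 0 ≤ ∑ i, k i := Finset.sum_nonneg (fun i _ => hk i)
    omega
  · intro hl
    exact ⟨lam, l, fun i => (hlam i).1, hl, rfl⟩
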